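/- arXiv:1811.05232 — 2 statements merged into one kernel-verified Lean document; each statement's English description precedes it below -/
import Mathlib

section
/- Let $\sigma_1, \dots, \sigma_L$ be activation functions with $\sigma_i$ being $\rho_i$-Lipschitz and $\sigma_i(0) = 0$, applied coordinatewise. Let $\mathcal{A} = (A_1, \dots, A_L)$ and $\mathcal{A}' = (A_1', \dots, A_L')$ be weight matrices with $\|A_i\|_\sigma \leq s_i$ and $\|A_i'\|_\sigma \leq s_i$ (spectral norms), and let $\mathcal{H}_{\mathcal{A}}(x) = \sigma_L(A_L \sigma_{L-1}(\cdots \sigma_1(A_1 x)))$. Then for any $x$ with $\|x\|_2 \leq B$, $\|\mathcal{H}_{\mathcal{A}}(x) - \mathcal{H}_{\mathcal{A}'}(x)\|_2 \leq \prod_{i=1}^L \rho_i s_i \cdot B \cdot \sum_{j=1}^L \frac{\|A_j - A_j'\|_\sigma}{s_j}$. -/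
/-!
Writing `Hₙ` for the first `n` layers, one has `Hₙ₊₁ x - H'ₙ₊₁ x = σₙ(Aₙ Hₙ x) - σₙ(A'ₙ H'ₙ x)` and
`Aₙ y - A'ₙ y' = (Aₙ - A'ₙ) y + A'ₙ (y - y')`. Since `‖Hₙ x‖ ≤ ∏_{i<n} ρᵢ sᵢ · ‖x‖`, the distance
`Dₙ` between the two networks satisfies `Dₙ₊₁ ≤ ρₙ (‖Aₙ - A'ₙ‖ ∏_{i<n} ρᵢ sᵢ ‖x‖ + sₙ Dₙ)`, and this
recursion unfolds to the sum over the layers.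
-/

/-- A feed-forward network: `net d A σ n x` is the output of the first `n` layers on input
`x`, where layer `i` applies the linear map `A i` followed by the coordinatewise activation
`σ i`. -/
noncomputable def net (d : ℕ → ℕ)
    (A : (i : ℕ) → EuclideanSpace ℝ (Fin (d i)) →L[ℝ] EuclideanSpace ℝ (Fin (d (i + 1))))
    (σ : ℕ → ℝ → ℝ) :
    (n : ℕ) → EuclideanSpace ℝ (Fin (d 0)) → EuclideanSpace ℝ (Fin (d n))
  | 0, x => x
  | (n + 1), x => WithLp.toLp 2 (fun j => σ n ((A n (net d A σ n x)) j))

open WithLp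

lemma nonneg_of_forall_abs_sub_le_mul {f : ℝ → ℝ} {ρ : ℝ}
    (hf : ∀ r r' : ℝ, |f r - f r'| ≤ ρ * |r - r'|) : 0 ≤ ρ := by
  simpa using (abs_nonneg _).trans (hf 1 0)

namespace EuclideanSpace

variable {ι : Type*} [Fintype ι] {f : ℝ → ℝ} {ρ : ℝ}

lemma norm_toLp_comp_sub_toLp_comp_le (hf : ∀ r r' : ℝ, |f r - f r'| ≤ ρ * |r - r'|)
    (u v : EuclideanSpace ℝ ι) :
    ‖toLp 2 (fun j => f (u j)) - toLp 2 (fun j => f (v j))‖ ≤ ρ * ‖u - v‖ := by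
  have hρ := nonneg_of_forall_abs_sub_le_mul hf
  rw [← pow_le_pow_iff_left₀ (norm_nonneg _) (by positivity) two_ne_zero, mul_pow,
    EuclideanSpace.norm_sq_eq, EuclideanSpace.norm_sq_eq, Finset.mul_sum]
  refine Finset.sum_le_sum fun j _ => ?_
  rw [← mul_pow]
  exact pow_le_pow_left₀ (abs_nonneg _) (hf (u j) (v j)) 2

lemma norm_toLp_comp_le (hf : ∀ r r' : ℝ, |f r - f r'| ≤ ρ * |r - r'|) (hf0 : f 0 = 0)
    (u : EuclideanSpace ℝ ι) : ‖toLp 2 (fun j => f (u j))‖ ≤ ρ * ‖u‖ := by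
  simpa [hf0, ← Pi.zero_def, WithLp.toLp_zero] using norm_toLp_comp_sub_toLp_comp_le hf u 0

end EuclideanSpace

lemma ContinuousLinearMap.norm_apply_sub_apply_le {𝕜 E F : Type*} [NontriviallyNormedField 𝕜]
    [SeminormedAddCommGroup E] [SeminormedAddCommGroup F] [NormedSpace 𝕜 E] [NormedSpace 𝕜 F]
    (f g : E →L[𝕜] F) (y y' : E) :
    ‖f y - g y'‖ ≤ ‖f - g‖ * ‖y‖ + ‖g‖ * ‖y - y'‖ := by
  have hsplit : f y - g y' = (f - g) y + g (y - y') := by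
    simp only [sub_apply, map_sub]
    abel
  rw [hsplit]
  exact (norm_add_le _ _).trans (add_le_add ((f - g).le_opNorm y) (g.le_opNorm _))

section Net

variable {d : ℕ → ℕ}
  {A A' : (i : ℕ) → EuclideanSpace ℝ (Fin (d i)) →L[ℝ] EuclideanSpace ℝ (Fin (d (i + 1)))}
  {σ : ℕ → ℝ → ℝ} {ρ s : ℕ → ℝ}

lemma prod_layer_bounds_nonneg (hσ : ∀ i, ∀ r r' : ℝ, |σ i r - σ i r'| ≤ ρ i * |r - r'|)
    (hA : ∀ i, ‖A i‖ ≤ s i) (n : ℕ) : 0 ≤ ∏ i ∈ Finset.range n, ρ i * s i :=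
  Finset.prod_nonneg fun i _ =>
    mul_nonneg (nonneg_of_forall_abs_sub_le_mul (hσ i)) ((norm_nonneg _).trans (hA i))

lemma norm_net_le (hσ : ∀ i, ∀ r r' : ℝ, |σ i r - σ i r'| ≤ ρ i * |r - r'|)
    (hσ0 : ∀ i, σ i 0 = 0) (hA : ∀ i, ‖A i‖ ≤ s i) (x : EuclideanSpace ℝ (Fin (d 0))) (n : ℕ) :
    ‖net d A σ n x‖ ≤ (∏ i ∈ Finset.range n, ρ i * s i) * ‖x‖ := by
  induction n with
  | zero => simp [net]
  | succ n ih =>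
    have hρ := nonneg_of_forall_abs_sub_le_mul (hσ n)
    have hs := (norm_nonneg _).trans (hA n)
    calc ‖net d A σ (n + 1) x‖ ≤ ρ n * ‖A n (net d A σ n x)‖ :=
          EuclideanSpace.norm_toLp_comp_le (hσ n) (hσ0 n) _
      _ ≤ ρ n * (s n * ‖net d A σ n x‖) := by
          gcongr; exact (A n).le_of_opNorm_le (hA n) _
      _ ≤ ρ n * (s n * ((∏ i ∈ Finset.range n, ρ i * s i) * ‖x‖)) := by gcongr
      _ = (∏ i ∈ Finset.range (n + 1), ρ i * s i) * ‖x‖ := by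
          rw [Finset.prod_range_succ]; ring

lemma norm_net_sub_net_le (hσ : ∀ i, ∀ r r' : ℝ, |σ i r - σ i r'| ≤ ρ i * |r - r'|)
    (hσ0 : ∀ i, σ i 0 = 0) (hs : ∀ i, 0 < s i) (hA : ∀ i, ‖A i‖ ≤ s i)
    (hA' : ∀ i, ‖A' i‖ ≤ s i) (x : EuclideanSpace ℝ (Fin (d 0))) (n : ℕ) :
    ‖net d A σ n x - net d A' σ n x‖ ≤
      (∏ i ∈ Finset.range n, ρ i * s i) * ‖x‖ * ∑ j ∈ Finset.range n, ‖A j - A' j‖ / s j := by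
  induction n with
  | zero => simp [net]
  | succ n ih =>
    set P := ∏ i ∈ Finset.range n, ρ i * s i
    set y := net d A σ n x
    set y' := net d A' σ n x
    have hρ := nonneg_of_forall_abs_sub_le_mul (hσ n)
    have hy : ‖y‖ ≤ P * ‖x‖ := norm_net_le hσ hσ0 hA x n
    calc ‖net d A σ (n + 1) x - net d A' σ (n + 1) x‖ ≤ ρ n * ‖A n y - A' n y'‖ :=
          EuclideanSpace.norm_toLp_comp_sub_toLp_comp_le (hσ n) _ _
      _ ≤ ρ n * (‖A n - A' n‖ * ‖y‖ + ‖A' n‖ * ‖y - y'‖) := by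
          gcongr; exact (A n).norm_apply_sub_apply_le (A' n) y y'
      _ ≤ ρ n * (‖A n - A' n‖ * (P * ‖x‖) +
            s n * (P * ‖x‖ * ∑ j ∈ Finset.range n, ‖A j - A' j‖ / s j)) := by
          gcongr
          · exact (norm_nonneg _).trans (hA n)
          · exact hA' n
      _ = (∏ i ∈ Finset.range (n + 1), ρ i * s i) * ‖x‖ *
            ∑ j ∈ Finset.range (n + 1), ‖A j - A' j‖ / s j := by
          rw [Finset.prod_range_succ, Finset.sum_range_succ]
          field_simp [(hs n).ne']
          ring

end Net

theorem network_weight_perturbation_bound_general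
    (L : ℕ) (d : ℕ → ℕ)
    (A A' : (i : ℕ) → EuclideanSpace ℝ (Fin (d i)) →L[ℝ] EuclideanSpace ℝ (Fin (d (i + 1))))
    (σ : ℕ → ℝ → ℝ) (ρ s : ℕ → ℝ)
    (hσ : ∀ i, ∀ r r' : ℝ, |σ i r - σ i r'| ≤ ρ i * |r - r'|)
    (hσ0 : ∀ i, σ i 0 = 0)
    (hs : ∀ i, 0 < s i)
    (hA : ∀ i, ‖A i‖ ≤ s i) (hA' : ∀ i, ‖A' i‖ ≤ s i)
    (B : ℝ) (x : EuclideanSpace ℝ (Fin (d 0))) (hx : ‖x‖ ≤ B) :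
    ‖net d A σ L x - net d A' σ L x‖ ≤
      (∏ i ∈ Finset.range L, ρ i * s i) * B *
        ∑ j ∈ Finset.range L, ‖A j - A' j‖ / s j := by
  have hP := prod_layer_bounds_nonneg hσ hA L
  have hS : 0 ≤ ∑ j ∈ Finset.range L, ‖A j - A' j‖ / s j :=
    Finset.sum_nonneg fun j _ => div_nonneg (norm_nonneg _) (hs j).le
  calc ‖net d A σ L x - net d A' σ L x‖
      ≤ (∏ i ∈ Finset.range L, ρ i * s i) * ‖x‖ * ∑ j ∈ Finset.range L, ‖A j - A' j‖ / s j :=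
        norm_net_sub_net_le hσ hσ0 hs hA hA' x L
    _ ≤ _ := by gcongr

/-- Lemma C.3: perturbation bound for networks.  If each activation `σᵢ` is `ρᵢ`-Lipschitz
with `σᵢ(0) = 0`, and the weight matrices of both networks have spectral norm at most `sᵢ`,
then on inputs of norm at most `B`,
`‖H_A(x) - H_{A'}(x)‖ ≤ ∏ᵢ ρᵢ sᵢ · B · ∑ⱼ ‖Aⱼ - Aⱼ'‖_σ / sⱼ`. -/
theorem network_weight_perturbation_bound
    (L : ℕ) (d : ℕ → ℕ)
    (A A' : (i : ℕ) → EuclideanSpace ℝ (Fin (d i)) →L[ℝ] EuclideanSpace ℝ (Fin (d (i + 1))))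
    (σ : ℕ → ℝ → ℝ) (ρ s : ℕ → ℝ)
    (hρ : ∀ i, 0 ≤ ρ i)
    (hσ : ∀ i, ∀ r r' : ℝ, |σ i r - σ i r'| ≤ ρ i * |r - r'|)
    (hσ0 : ∀ i, σ i 0 = 0)
    (hs : ∀ i, 0 < s i)
    (hA : ∀ i, ‖A i‖ ≤ s i) (hA' : ∀ i, ‖A' i‖ ≤ s i)
    (B : ℝ) (x : EuclideanSpace ℝ (Fin (d 0))) (hx : ‖x‖ ≤ B) :
    ‖net d A σ L x - net d A' σ L x‖ ≤
      (∏ i ∈ Finset.range L, ρ i * s i) * B *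
        ∑ j ∈ Finset.range L, ‖A j - A' j‖ / s j :=
  network_weight_perturbation_bound_general L d A A' σ ρ s hσ hσ0 hs hA hA' B x hx
end

section
/- Let $\mathcal{Z} = \mathcal{X} \times \{-1,+1\}$ with $\mathcal{X} = \{x \in \mathbb{R}^d : \|x\|_2 \leq r\}$, and the metric $d_{\mathcal{Z}}((x,y),(x',y')) = \|x-x'\|_2 + \mathbf{1}[y \neq y']$. Fix $w \in \mathbb{R}^d$ and define the hinge-loss function $f(x,y) = \max\{0, 1 - y\, w \cdot x\}$. Then for all $z = (x,y)$ and $z' = (x',y')$ in $\mathcal{Z}$, $f(z') - f(z) \leq \max\{2y\, w\cdot x,\ \|w\|_2\} \cdot d_{\mathcal{Z}}(z,z')$ whenever $\max\{2y\,w\cdot x, \|w\|_2\} \geq 0$; in particular $f(z') - f(z) \leq \max\{2|w\cdot x|, \|w\|_2\}\, d_{\mathcal{Z}}(z,z')$. -/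
/-!
The hinge `t ↦ max 0 (1 - t)` is nonincreasing and 1-Lipschitz, so the loss can grow by at most
the drop of the margin, `y ⟪w, x⟫ - y' ⟪w, x'⟫`. For equal labels Cauchy–Schwarz bounds this by
`‖w‖ ‖x - x'‖`; flipping the label (`y' = -y`) adds exactly `2 y ⟪w, x⟫` to that drop.
-/

open scoped RealInnerProductSpace

theorem max_zero_sub_sub_max_zero_sub_le (c a b : ℝ) :
    max 0 (c - b) - max 0 (c - a) ≤ max 0 (a - b) := by
  simpa using max_sub_max_le_max 0 (c - b) 0 (c - a)

section Margin

variable {E : Type*} [NormedAddCommGroup E] [InnerProductSpace ℝ E]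

theorem mul_inner_sub_mul_inner_le {y : ℝ} (hy : |y| = 1) (w x x' : E) :
    y * ⟪w, x⟫ - y * ⟪w, x'⟫ ≤ ‖w‖ * ‖x - x'‖ :=
  calc y * ⟪w, x⟫ - y * ⟪w, x'⟫ = y * ⟪w, x - x'⟫ := by rw [inner_sub_right, mul_sub]
    _ ≤ |y * ⟪w, x - x'⟫| := le_abs_self _
    _ = |⟪w, x - x'⟫| := by rw [abs_mul, hy, one_mul]
    _ ≤ ‖w‖ * ‖x - x'‖ := abs_real_inner_le_norm w (x - x')

theorem mul_inner_sub_neg_mul_inner_le {y : ℝ} (hy : |y| = 1) (w x x' : E) :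
    y * ⟪w, x⟫ - -y * ⟪w, x'⟫ ≤ 2 * y * ⟪w, x⟫ + ‖w‖ * ‖x - x'‖ := by
  have := mul_inner_sub_mul_inner_le (y := -y) (by rwa [abs_neg]) w x x'
  linarith

theorem mul_inner_sub_mul_inner_le_of_le {y y' : ℝ} (hy : |y| = 1) (hy' : |y'| = 1)
    (w x x' : E) {M : ℝ} (hyM : 2 * y * ⟪w, x⟫ ≤ M) (hwM : ‖w‖ ≤ M) :
    y * ⟪w, x⟫ - y' * ⟪w, x'⟫ ≤ M * (‖x - x'‖ + if y = y' then 0 else 1) := by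
  have hwM' : ‖w‖ * ‖x - x'‖ ≤ M * ‖x - x'‖ := mul_le_mul_of_nonneg_right hwM (norm_nonneg _)
  split_ifs with hyy'
  · subst hyy'
    linarith [mul_inner_sub_mul_inner_le hy w x x']
  · obtain rfl : y' = -y := by
      rcases abs_eq_abs.mp (hy.trans hy'.symm) with h | h
      · exact absurd h hyy'
      · linarith
    linarith [mul_inner_sub_neg_mul_inner_le hy w x x']

theorem hinge_sub_hinge_le {y y' : ℝ} (hy : |y| = 1) (hy' : |y'| = 1)
    (w x x' : E) {M : ℝ} (hyM : 2 * y * ⟪w, x⟫ ≤ M) (hwM : ‖w‖ ≤ M) (hM : 0 ≤ M) :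
    max 0 (1 - y' * ⟪w, x'⟫) - max 0 (1 - y * ⟪w, x⟫) ≤
      M * (‖x - x'‖ + if y = y' then 0 else 1) :=
  (max_zero_sub_sub_max_zero_sub_le _ _ _).trans <|
    max_le (by positivity) (mul_inner_sub_mul_inner_le_of_le hy hy' w x x' hyM hwM)

end Margin

theorem hinge_loss_weak_lipschitz_general
    (dm : ℕ) (w : EuclideanSpace ℝ (Fin dm))
    (x x' : EuclideanSpace ℝ (Fin dm))
    (y y' : ℝ) (hy : y = 1 ∨ y = -1) (hy' : y' = 1 ∨ y' = -1) :
    ((0 : ℝ) ≤ max (2 * y * (inner ℝ w x : ℝ)) ‖w‖ →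
      max 0 (1 - y' * (inner ℝ w x' : ℝ)) - max 0 (1 - y * (inner ℝ w x : ℝ)) ≤
        max (2 * y * (inner ℝ w x : ℝ)) ‖w‖ *
          (‖x - x'‖ + if y = y' then 0 else 1)) ∧
    max 0 (1 - y' * (inner ℝ w x' : ℝ)) - max 0 (1 - y * (inner ℝ w x : ℝ)) ≤
      max (2 * |(inner ℝ w x : ℝ)|) ‖w‖ * (‖x - x'‖ + if y = y' then 0 else 1) := by
  have hy₁ : |y| = 1 := by rcases hy with rfl | rfl <;> norm_num
  have hy₁' : |y'| = 1 := by rcases hy' with rfl | rfl <;> norm_num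
  have hmargin : 2 * y * ⟪w, x⟫ ≤ 2 * |⟪w, x⟫| :=
    calc 2 * y * ⟪w, x⟫ ≤ 2 * |y * ⟪w, x⟫| := by
          rw [mul_assoc]; exact mul_le_mul_of_nonneg_left (le_abs_self _) zero_le_two
      _ = 2 * |⟪w, x⟫| := by rw [abs_mul, hy₁, one_mul]
  refine ⟨hinge_sub_hinge_le hy₁ hy₁' w x x' (le_max_left _ _) (le_max_right _ _), ?_⟩
  exact hinge_sub_hinge_le hy₁ hy₁' w x x' (hmargin.trans (le_max_left _ _)) (le_max_right _ _)
    ((norm_nonneg w).trans (le_max_right _ _))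

/-- Verification of the weak Lipschitz condition (Assumption 3) for the SVM hinge loss
`f(x,y) = max{0, 1 - y ⟨w, x⟩}` with the metric
`d_Z((x,y),(x',y')) = ‖x - x'‖₂ + 1[y ≠ y']`. -/
theorem hinge_loss_weak_lipschitz
    (dm : ℕ) (r : ℝ) (hr : 0 < r) (w : EuclideanSpace ℝ (Fin dm))
    (x x' : EuclideanSpace ℝ (Fin dm)) (hx : ‖x‖ ≤ r) (hx' : ‖x'‖ ≤ r)
    (y y' : ℝ) (hy : y = 1 ∨ y = -1) (hy' : y' = 1 ∨ y' = -1) :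
    ((0 : ℝ) ≤ max (2 * y * (inner ℝ w x : ℝ)) ‖w‖ →
      max 0 (1 - y' * (inner ℝ w x' : ℝ)) - max 0 (1 - y * (inner ℝ w x : ℝ)) ≤
        max (2 * y * (inner ℝ w x : ℝ)) ‖w‖ *
          (‖x - x'‖ + if y = y' then 0 else 1)) ∧
    max 0 (1 - y' * (inner ℝ w x' : ℝ)) - max 0 (1 - y * (inner ℝ w x : ℝ)) ≤
      max (2 * |(inner ℝ w x : ℝ)|) ‖w‖ * (‖x - x'‖ + if y = y' then 0 else 1) :=
  hinge_loss_weak_lipschitz_general dm w x x' y y' hy hy'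
end
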